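/- arXiv:2002.09596 — 3 statements merged into one kernel-verified Lean document; each statement's English description precedes it below -/
import Mathlib

section
/- Let R be a Noetherian ring and M a finitely generated R-module. If 0 → F → M → I → 0 is a short exact sequence of R-modules with F finitely generated free and I an ideal of R with grade(I) > 2, then the sequence splits, so M ≅ F ⊕ I. -/
/-- `grade I ≥ k`: there is a regular sequence of length `k` contained in `I`. -/
def hasRegularSeqOfLength {R : Type*} [CommRing R] (I : Ideal R) (k : ℕ) : Prop :=
  ∃ rs : List R, rs.length = k ∧ (∀ r ∈ rs, r ∈ I) ∧ RingTheory.Sequence.IsRegular R rs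

/-!
The extension class lies in `Ext¹(I, F)`, which vanishes when `grade I > 2`; concretely, take a
regular sequence `a, b, c` in `I` and a lift `mₐ` of `a`. For every `m`, the element
`g(m) • mₐ - a • m` lies in `F`, which gives `φ : M → F` with
`g(m') • φ(m) - g(m) • φ(m') ∈ aF`. Applying this to lifts of `b` and `c`, regularity of `c` on
`F/(a,b)F` and then of `b` on `F/aF` (`F` is flat, so the sequence stays regular on it) yield
`u ∈ F` with `φ(m) ≡ g(m) • u` modulo `aF`. Then `n = mₐ - u` satisfies `x • n ∈ aM` for all
`x ∈ I`, and `x ↦ (x • n) / a` is a section of `g`, as `a` is regular on `M`.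
-/

open Function RingTheory.Sequence Submodule

namespace RingTheory.Sequence.IsWeaklyRegular

variable {R F : Type*} [CommRing R] [AddCommGroup F] [Module R F]

lemma of_flat_module [Module.Flat R F] {rs : List R} (h : IsWeaklyRegular R rs) :
    IsWeaklyRegular F rs :=
  ((TensorProduct.rid R F).isWeaklyRegular_congr rs).mp h.isWeaklyRegular_lTensor

lemma exists_eq_smul_of_smul_eq_smul {a b : R} {rs : List R}
    (h : IsWeaklyRegular F (a :: b :: rs)) {x t : F} (hx : b • x = a • t) : ∃ s, x = a • s := by
  have := mem_of_isSMulRegular_quotient_of_smul_mem (h.regular_mod_prev 1 (by simp)) (x := x)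
    (by simpa [ideal_span_singleton_smul, mem_smul_pointwise_iff_exists] using ⟨t, hx.symm⟩)
  simpa [ideal_span_singleton_smul, mem_smul_pointwise_iff_exists, eq_comm] using this

lemma exists_eq_smul_add_smul_of_smul_eq {a b c : R} {rs : List R}
    (h : IsWeaklyRegular F (a :: b :: c :: rs)) {x t v : F} (hx : c • x = a • t + b • v) :
    ∃ s w, x = a • s + b • w := by
  have := mem_of_isSMulRegular_quotient_of_smul_mem (h.regular_mod_prev 2 (by simp)) (x := x)
    (by simpa [sup_smul, mem_sup, ideal_span_singleton_smul, mem_smul_pointwise_iff_exists]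
      using ⟨t, v, hx.symm⟩)
  simpa [sup_smul, mem_sup, ideal_span_singleton_smul, mem_smul_pointwise_iff_exists, eq_comm]
    using this

end RingTheory.Sequence.IsWeaklyRegular

section

variable {R M N F : Type*} [CommRing R] [AddCommGroup M] [Module R M] [AddCommGroup N] [Module R N]
  [AddCommGroup F] [Module R F]

lemma exists_sub_smul_eq_smul_of_isWeaklyRegular {X : Type*} {a b c : R}
    (hreg : IsWeaklyRegular F [a, b, c]) (γ : X → R) (φ : X → F)
    (hφ : ∀ x y, ∃ t, γ y • φ x - γ x • φ y = a • t) {xb xc : X} (hb : γ xb = b)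
    (hc : γ xc = c) : ∃ u : F, ∀ x, ∃ t, φ x - γ x • u = a • t := by
  subst hb hc
  obtain ⟨t, ht⟩ := hφ xb xc
  obtain ⟨v, u, hvu⟩ := hreg.exists_eq_smul_add_smul_of_smul_eq (sub_eq_iff_eq_add.mp ht)
  refine ⟨u, fun x => ?_⟩
  obtain ⟨t', ht'⟩ := hφ x xb
  exact hreg.exists_eq_smul_of_smul_eq_smul (t := t' + γ x • v) <| by
    rw [hvu] at ht'
    linear_combination (norm := module) ht'

lemma exists_linearMap_smul_eq_of_isSMulRegular {a : R} (ha : IsSMulRegular M a) (t : N →ₗ[R] M)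
    (ht : ∀ x, ∃ m, a • m = t x) : ∃ s : N →ₗ[R] M, ∀ x, a • s x = t x := by
  let e := LinearEquiv.ofInjective (LinearMap.lsmul R M a) ha
  refine ⟨e.symm.toLinearMap ∘ₗ t.codRestrict _ ht, fun x => ?_⟩
  exact congrArg Subtype.val (e.apply_symm_apply ⟨t x, ht x⟩)

lemma exists_section_of_forall_exists_smul_eq {I : Ideal R} (g : M →ₗ[R] I) {a : R}
    (ha : IsSMulRegular R a) (haM : IsSMulRegular M a) {n : M} (hn : (g n : R) = a)
    (hdiv : ∀ x : I, ∃ m, a • m = (x : R) • n) : ∃ s : I →ₗ[R] M, g ∘ₗ s = LinearMap.id := by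
  obtain ⟨s, hs⟩ := exists_linearMap_smul_eq_of_isSMulRegular haM
    (LinearMap.toSpanSingleton R M n ∘ₗ I.subtype) hdiv
  refine ⟨s, LinearMap.ext fun x => Subtype.ext (ha ?_)⟩
  calc a • (g (s x) : R) = (g (a • s x) : R) := by simp
    _ = a • (x : R) := by simp [hs, hn, mul_comm]

lemma exists_lift_forall_exists_smul_eq_of_isWeaklyRegular {I : Ideal R} {f : F →ₗ[R] M}
    {g : M →ₗ[R] I} (hf : Injective f) (hg : Surjective g) (hfg : Exact f g) {a b c : R}
    (hreg : IsWeaklyRegular F [a, b, c]) (ha : a ∈ I) (hb : b ∈ I) (hc : c ∈ I) :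
    ∃ n : M, (g n : R) = a ∧ ∀ x : I, ∃ m, a • m = (x : R) • n := by
  obtain ⟨mA, hmA⟩ := hg ⟨a, ha⟩
  obtain ⟨mB, hmB⟩ := hg ⟨b, hb⟩
  obtain ⟨mC, hmC⟩ := hg ⟨c, hc⟩
  have hlift : ∀ m, ∃ w, f w = (g m : R) • mA - a • m := fun m =>
    (hfg _).mp (by ext; simp [hmA, mul_comm])
  choose φ hφ using hlift
  have hcocycle : ∀ m m', ∃ t, (g m' : R) • φ m - (g m : R) • φ m' = a • t := by
    intro m m'
    obtain ⟨t, ht⟩ := (hfg ((g m : R) • m' - (g m' : R) • m)).mp (by ext; simp [mul_comm])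
    exact ⟨t, hf (by simp only [map_sub, map_smul, hφ, ht]; module)⟩
  obtain ⟨u, hu⟩ := exists_sub_smul_eq_smul_of_isWeaklyRegular hreg (fun m => (g m : R)) φ
    hcocycle (congrArg Subtype.val hmB) (congrArg Subtype.val hmC)
  refine ⟨mA - f u, by simp [hmA, hfg.apply_apply_eq_zero], fun x => ?_⟩
  obtain ⟨m, rfl⟩ := hg x
  obtain ⟨t, ht⟩ := hu m
  exact ⟨m + f t, by rw [smul_add, ← map_smul, ← ht, map_sub, map_smul, hφ]; module⟩

end

theorem stmt0_general {R M F : Type*} [CommRing R]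
    [AddCommGroup M] [Module R M]
    [AddCommGroup F] [Module R F] [Module.Free R F]
    (I : Ideal R) (f : F →ₗ[R] M) (g : M →ₗ[R] I)
    (hf : Function.Injective f) (hg : Function.Surjective g)
    (hex : LinearMap.range f = LinearMap.ker g)
    (hgrade : hasRegularSeqOfLength I 3) :
    (∃ s : I →ₗ[R] M, g ∘ₗ s = LinearMap.id) ∧ Nonempty (M ≃ₗ[R] F × I) := by
  obtain ⟨rs, hlen, hrsI, hreg⟩ := hgrade
  obtain ⟨a, b, c, rfl⟩ := List.length_eq_three.mp hlen
  have hfg : Exact f g := LinearMap.exact_iff.mpr hex.symm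
  have haR : IsSMulRegular R a := ((isRegular_cons_iff R a _).mp hreg).1
  have hregF : IsWeaklyRegular F [a, b, c] := hreg.toIsWeaklyRegular.of_flat_module
  have haM : IsSMulRegular M a := isSMulRegular_of_range_eq_ker hf hex
    ((isWeaklyRegular_cons_iff F a _).mp hregF).1 (haR.submodule I)
  obtain ⟨n, hn, hdiv⟩ := exists_lift_forall_exists_smul_eq_of_isWeaklyRegular hf hg hfg hregF
    (hrsI a (by simp)) (hrsI b (by simp)) (hrsI c (by simp))
  obtain ⟨s, hs⟩ := exists_section_of_forall_exists_smul_eq g haR haM hn hdiv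
  exact ⟨⟨s, hs⟩, ⟨(hfg.splitSurjectiveEquiv hf ⟨s, hs⟩).1⟩⟩

/-- a Bourbaki sequence `0 → F → M → I → 0` with `grade I > 2` splits,
so `M ≅ F ⊕ I`. -/
theorem stmt0 {R M F : Type*} [CommRing R] [IsNoetherianRing R]
    [AddCommGroup M] [Module R M] [Module.Finite R M]
    [AddCommGroup F] [Module R F] [Module.Free R F] [Module.Finite R F]
    (I : Ideal R) (f : F →ₗ[R] M) (g : M →ₗ[R] I)
    (hf : Function.Injective f) (hg : Function.Surjective g)
    (hex : LinearMap.range f = LinearMap.ker g)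
    (hgrade : hasRegularSeqOfLength I 3) :
    (∃ s : I →ₗ[R] M, g ∘ₗ s = LinearMap.id) ∧ Nonempty (M ≃ₗ[R] F × I) :=
  stmt0_general I f g hf hg hex hgrade
end

section
/- Let R be a Noetherian ring such that R_p is Gorenstein for every p ∈ Ass(R), and let M be a finitely generated R-module. Then M is torsionfree if and only if there exists an injective R-module homomorphism from M into a finitely generated free R-module, and this holds if and only if the canonical evaluation map M → M** is injective. -/
/-- A module is torsionfree if the canonical map `M → Q(R) ⊗_R M` is injective. -/
def IsTorsionFreeModule (R M : Type*) [CommRing R] [AddCommGroup M] [Module R M] : Prop :=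
  Function.Injective (LocalizedModule.mkLinearMap (nonZeroDivisors R) M)

/-- `R` is generically Gorenstein: `R_p` is Gorenstein (equivalently, an Artinian
Gorenstein, i.e. Noetherian self-injective, local ring) for all `p ∈ Ass R`. -/
def GenericallyGorenstein (R : Type*) [CommRing R] : Prop :=
  ∀ p : Ideal R, ∀ hp : IsAssociatedPrime p R,
    haveI : p.IsPrime := hp.isPrime
    IsNoetherianRing (Localization.AtPrime p) ∧
      Module.Injective (Localization.AtPrime p) (Localization.AtPrime p)

/-! If `x ≠ 0` in a torsionfree `M`, the annihilator of `x` consists of zero divisors, so by prime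
avoidance it lies in an associated prime `q = ann(y)` of `R`. Over the self-injective ring `R_q`,
`a • x ↦ a • y` extends to a functional on `M_q` that is nonzero at `x/1`. Since `M` is finitely
presented, `Hom(M_q, R_q) = Hom(M, R)_q`, so already some `ψ : M → R` has `ψ x ≠ 0`: `M → M**` is
injective. Evaluating at finitely many generators of `M*` then embeds `M` into some `R^m`, and
submodules of `R^m` are torsionfree. -/

open Module Submodule

section TorsionFree

variable {R M : Type*} [CommRing R] [AddCommGroup M] [Module R M]

lemma isTorsionFreeModule_iff :
    IsTorsionFreeModule R M ↔ ∀ x : M, ∀ r ∈ nonZeroDivisors R, r • x = 0 → x = 0 := by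
  simp only [IsTorsionFreeModule, injective_iff_map_eq_zero, ← LinearMap.mem_ker,
    LocalizedModule.mem_ker_mkLinearMap_iff, forall_exists_index, and_imp]

lemma injective_dual_eval_iff :
    Function.Injective (Dual.eval R M) ↔ ∀ x : M, (∀ φ : Dual R M, φ x = 0) → x = 0 := by
  simp only [injective_iff_map_eq_zero, LinearMap.ext_iff, Dual.eval_apply, LinearMap.zero_apply]

lemma IsTorsionFreeModule.of_injective_dual_eval (h : Function.Injective (Dual.eval R M)) :
    IsTorsionFreeModule R M := by
  refine isTorsionFreeModule_iff.mpr fun x r hr hrx => injective_dual_eval_iff.mp h x fun φ => ?_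
  have : r * φ x = 0 := by rw [← smul_eq_mul, ← map_smul, hrx, map_zero]
  exact (mul_left_mem_nonZeroDivisors_eq_zero_iff hr).mp this

lemma injective_dual_eval_of_injective {ι : Type*} (f : M →ₗ[R] (ι → R))
    (hf : Function.Injective f) : Function.Injective (Dual.eval R M) :=
  injective_dual_eval_iff.mpr fun x hx =>
    hf <| by ext i; simpa using hx (LinearMap.proj i ∘ₗ f)

lemma exists_injective_of_injective_dual_eval [Module.Finite R (Dual R M)]
    (h : Function.Injective (Dual.eval R M)) :
    ∃ (m : ℕ) (f : M →ₗ[R] (Fin m → R)), Function.Injective f := by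
  obtain ⟨m, ψ, hψ⟩ := Module.Finite.exists_fin (R := R) (M := Dual R M)
  refine ⟨m, LinearMap.pi ψ, injective_iff_map_eq_zero _ |>.mpr fun x hx => ?_⟩
  have : Dual.eval R M x = 0 := LinearMap.ext_on_range hψ fun i => congrFun hx i
  exact injective_iff_map_eq_zero _ |>.mp h x this

lemma disjoint_colon_nonZeroDivisors (hM : IsTorsionFreeModule R M) {x : M} (hx : x ≠ 0) :
    Disjoint (((⊥ : Submodule R M).colon {x} : Ideal R) : Set R) (nonZeroDivisors R) :=
  Set.disjoint_left.mpr fun r hr hrS =>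
    hx <| isTorsionFreeModule_iff.mp hM x r hrS (by simpa using mem_colon_singleton.mp hr)

end TorsionFree

lemma Ideal.exists_mem_associatedPrimes_le_of_disjoint_nonZeroDivisors {R : Type*} [CommRing R]
    [IsNoetherianRing R] {I : Ideal R} (h : Disjoint (I : Set R) (nonZeroDivisors R)) :
    ∃ P ∈ associatedPrimes R R, I ≤ P :=
  (I.subset_union_prime_finite (associatedPrimes.finite R R) (f := id) 0 0
    fun _ hP _ _ => hP.isPrime).mp <|
    biUnion_associatedPrimes_eq_compl_nonZeroDivisors R ▸ h.subset_compl_right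

section Localization

variable {R M M' : Type*} [CommRing R] [AddCommGroup M] [Module R M] [AddCommGroup M']
  [Module R M'] {q : Ideal R} [q.IsPrime] (f : M →ₗ[R] M') [IsLocalizedModule q.primeCompl f]

lemma IsLocalizedModule.apply_ne_zero_of_colon_le {x : M}
    (hx : (⊥ : Submodule R M).colon {x} ≤ q) : f x ≠ 0 := fun h => by
  obtain ⟨r, hr, hrx⟩ := (IsLocalizedModule.mem_ker_iff q.primeCompl).mp (LinearMap.mem_ker.mpr h)
  exact hr (hx (mem_colon_singleton.mpr hrx))

variable {Rq : Type*} [CommRing Rq] [Algebra R Rq] [IsLocalization.AtPrime Rq q] [Module Rq M']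
  [IsScalarTower R Rq M']

lemma IsLocalizedModule.mul_algebraMap_eq_zero_of_smul_eq_zero {x : M} {y : R}
    (hx : (⊥ : Submodule R M).colon {x} ≤ q) (hy : q ≤ (⊥ : Submodule R R).colon {y})
    (a : Rq) (ha : a • f x = 0) : a * algebraMap R Rq y = 0 := by
  obtain ⟨⟨r, t⟩, rfl⟩ := IsLocalization.mk'_surjective q.primeCompl a
  have hrx : f (r • x) = 0 := by
    rw [map_smul, ← algebraMap_smul Rq, ← IsLocalization.mk'_spec Rq r t, mul_comm, mul_smul]
    simp only [ha, smul_zero]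
  obtain ⟨u, hu, hurx⟩ :=
    (IsLocalizedModule.mem_ker_iff q.primeCompl).mp (LinearMap.mem_ker.mpr hrx)
  have hur : u * r ∈ q := hx (mem_colon_singleton.mpr (by simpa [mul_smul] using hurx))
  have hr : r ∈ q := (‹q.IsPrime›.mem_or_mem hur).resolve_left hu
  have hry : r * y = 0 := by simpa [mul_comm] using mem_colon_singleton.mp (hy hr)
  rw [mul_comm, IsLocalization.mul_mk'_eq_mk'_of_mul, mul_comm, hry, IsLocalization.mk'_zero]

end Localization

lemma Module.Injective.exists_linearMap_apply_eq {A N : Type*} [CommRing A] [Module.Injective A A]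
    [AddCommGroup N] [Module A N] {x : N} {z : A} (h : ∀ a : A, a • x = 0 → a * z = 0) :
    ∃ φ : N →ₗ[A] A, φ x = z := by
  set K := LinearMap.ker (LinearMap.toSpanSingleton A N x)
  have hK : K ≤ LinearMap.ker (LinearMap.toSpanSingleton A A z) := fun a ha => h a ha
  obtain ⟨φ, hφ⟩ := (Module.Baer.of_injective ‹_›).extension_property (K.liftQ _ le_rfl)
    (LinearMap.ker_eq_bot.mp (K.ker_liftQ_eq_bot _ _ le_rfl)) (K.liftQ _ hK)
  refine ⟨φ, ?_⟩
  simpa only [LinearMap.comp_apply, Submodule.liftQ_apply, LinearMap.toSpanSingleton_apply,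
    one_smul] using LinearMap.congr_fun hφ (Submodule.Quotient.mk 1)

lemma IsLocalizedModule.dual_apply_eq_zero_of_forall_dual_apply_eq_zero {R Rₛ M M' : Type*}
    [CommRing R] [CommRing Rₛ] [Algebra R Rₛ] (S : Submonoid R) [IsLocalization S Rₛ]
    [AddCommGroup M] [Module R M] [Module.FinitePresentation R M] [AddCommGroup M'] [Module R M']
    [Module Rₛ M'] [IsScalarTower R Rₛ M'] (f : M →ₗ[R] M') [IsLocalizedModule S f] {x : M}
    (hx : ∀ ψ : Dual R M, ψ x = 0) (φ : Dual Rₛ M') : φ (f x) = 0 := by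
  obtain ⟨⟨ψ, t⟩, hψ⟩ :=
    IsLocalizedModule.surj S (mapExtendScalars S f (Algebra.linearMap R Rₛ) Rₛ) φ
  have : algebraMap R Rₛ t * φ (f x) = 0 := by
    rw [← Algebra.smul_def, ← Submonoid.smul_def, ← LinearMap.smul_apply, hψ]
    simp [hx]
  exact (IsLocalization.map_units Rₛ t).mul_right_eq_zero.mp this

lemma injective_dual_eval_of_isTorsionFreeModule {R M : Type*} [CommRing R] [IsNoetherianRing R]
    [AddCommGroup M] [Module R M] [Module.Finite R M] (hR : GenericallyGorenstein R)
    (hM : IsTorsionFreeModule R M) : Function.Injective (Dual.eval R M) := by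
  refine injective_dual_eval_iff.mpr fun x hx => by_contra fun hx0 => ?_
  obtain ⟨q, hq, hxq⟩ := Ideal.exists_mem_associatedPrimes_le_of_disjoint_nonZeroDivisors
    (disjoint_colon_nonZeroDivisors hM hx0)
  obtain ⟨_, y, hy⟩ := isAssociatedPrime_iff.mp hq
  have := (hR q hq).2
  have hy0 : algebraMap R (Localization.AtPrime q) y ≠ 0 :=
    IsLocalizedModule.apply_ne_zero_of_colon_le (Algebra.linearMap R (Localization.AtPrime q)) hy.ge
  obtain ⟨φ, hφ⟩ := Module.Injective.exists_linearMap_apply_eq <|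
    IsLocalizedModule.mul_algebraMap_eq_zero_of_smul_eq_zero (Rq := Localization.AtPrime q)
      (LocalizedModule.mkLinearMap q.primeCompl M) hxq hy.le
  have := Module.finitePresentation_of_finite R M
  exact hy0 (hφ ▸ IsLocalizedModule.dual_apply_eq_zero_of_forall_dual_apply_eq_zero q.primeCompl
    (LocalizedModule.mkLinearMap q.primeCompl M) hx φ)

/-- over a Noetherian generically Gorenstein ring, `M` is torsionfree
iff it embeds into a finitely generated free module, iff the canonical map
`M → M**` is injective. -/
theorem stmt2 {R M : Type*} [CommRing R] [IsNoetherianRing R]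
    [AddCommGroup M] [Module R M] [Module.Finite R M]
    (hR : GenericallyGorenstein R) :
    (IsTorsionFreeModule R M ↔
      ∃ (m : ℕ) (f : M →ₗ[R] (Fin m → R)), Function.Injective f) ∧
    (IsTorsionFreeModule R M ↔ Function.Injective (Module.Dual.eval R M)) := by
  have h_eval := injective_dual_eval_of_isTorsionFreeModule (M := M) hR
  refine ⟨⟨fun hM => exists_injective_of_injective_dual_eval (h_eval hM), ?_⟩,
    ⟨h_eval, IsTorsionFreeModule.of_injective_dual_eval⟩⟩
  rintro ⟨m, f, hf⟩
  exact IsTorsionFreeModule.of_injective_dual_eval (injective_dual_eval_of_injective f hf)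
end

section
/- Let R be a Noetherian ring such that R_p is Gorenstein for every p ∈ Ass(R), and let M be a finitely generated R-module. Then M is reflexive (the canonical map M → M** is bijective) if and only if there exists an exact sequence 0 → M → F → G with F and G finitely generated free R-modules. -/
open Module LinearMap

section Duality

variable {R : Type*} [CommRing R] {A B C : Type*} [AddCommGroup A] [Module R A]
  [AddCommGroup B] [Module R B] [AddCommGroup C] [Module R C]

theorem Function.Exact.dualMap {q : A →ₗ[R] B} {e : B →ₗ[R] C} (h : Function.Exact q e)
    (he : Function.Surjective e) : Function.Exact e.dualMap q.dualMap := by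
  rw [LinearMap.exact_iff, ker_dualMap_eq_dualAnnihilator_range, ← h.linearMap_ker_eq,
    range_dualMap_eq_dualAnnihilator_ker_of_surjective e he]

theorem LinearMap.dualMap_injective_of_subsingleton_dual_quotient {u : A →ₗ[R] B}
    (h : Subsingleton (Dual R (B ⧸ range u))) : Function.Injective u.dualMap := by
  have := (Submodule.dualQuotEquivDualAnnihilator (range u)).toEquiv.symm.subsingleton
  rw [← ker_eq_bot, ker_dualMap_eq_dualAnnihilator_range]
  exact Submodule.eq_bot_of_subsingleton

theorem Module.IsReflexive.of_exact [IsReflexive R B] {i : A →ₗ[R] B} {g : B →ₗ[R] C}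
    (hi : Function.Injective i) (hig : Function.Exact i g)
    (hC : Function.Injective (Dual.eval R C)) (hi' : Function.Injective i.dualMap.dualMap) :
    IsReflexive R A where
  bijective_dual_eval' := by
    have hnat (f : A →ₗ[R] B) (a : A) :
        f.dualMap.dualMap (Dual.eval R A a) = Dual.eval R B (f a) := rfl
    refine ⟨fun a a' h => hi ((bijective_dual_eval R B).injective ?_), fun ξ => ?_⟩
    · rw [← hnat, ← hnat, h]
    obtain ⟨b, hb⟩ := (bijective_dual_eval R B).surjective (i.dualMap.dualMap ξ)
    obtain ⟨a, rfl⟩ : b ∈ range i := by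
      rw [← hig.linearMap_ker_eq, mem_ker]
      apply hC
      change g.dualMap.dualMap (Dual.eval R B b) = Dual.eval R C 0
      rw [hb, map_zero]
      ext φ
      change ξ (φ ∘ₗ g ∘ₗ i) = 0
      rw [hig.linearMap_comp_eq_zero, comp_zero, map_zero]
    exact ⟨a, hi' (by rw [hnat, hb])⟩

end Duality

section Localization

variable {R : Type*} [CommRing R] (S : Submonoid R)

theorem Module.injective_of_injective_localization
    [Module.Injective (Localization S) (Localization S)] :
    Module.Injective R (Localization S) where
  out X Y _ _ _ _ f hf g := by
    let mkX := LocalizedModule.mkLinearMap S X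
    let mkY := LocalizedModule.mkLinearMap S Y
    let gS := IsLocalizedModule.lift S mkX g (IsLocalizedModule.map_units (Algebra.linearMap R _))
    obtain ⟨h, hh⟩ := Module.Injective.out
      ((IsLocalizedModule.map S mkX mkY f).extendScalarsOfIsLocalization S (Localization S))
      (IsLocalizedModule.map_injective S mkX mkY f hf)
      (gS.extendScalarsOfIsLocalization S (Localization S))
    refine ⟨h.restrictScalars R ∘ₗ mkY, fun x => ?_⟩
    have := hh (mkX x)
    simp only [extendScalarsOfIsLocalization_apply', IsLocalizedModule.map_apply] at this
    simpa [gS, IsLocalizedModule.lift_apply] using this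

variable {N F : Type*} [AddCommGroup N] [Module R N] [AddCommGroup F] [Module R F]

theorem exists_smul_mem_range_dualMap [Module.Injective (Localization S) (Localization S)]
    [Module.Finite R N] [Module.FinitePresentation R F] {i : N →ₗ[R] F}
    (hi : Function.Injective i) (ψ : Dual R N) :
    ∃ s ∈ S, s • ψ ∈ range i.dualMap := by
  have := Module.injective_of_injective_localization S
  let ℓ := Algebra.linearMap R (Localization S)
  obtain ⟨ξ', hξ'⟩ := Module.Injective.extension_property R (Localization S) N F i hi (ℓ ∘ₗ ψ)
  obtain ⟨ξ, s, hξ⟩ := Module.FinitePresentation.exists_lift_of_isLocalizedModule S ℓ ξ'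
  obtain ⟨t, ht⟩ := Module.Finite.exists_smul_of_comp_eq_of_isLocalizedModule S ℓ
    (ξ ∘ₗ i) ((s : R) • ψ) (by rw [← comp_assoc, hξ, smul_comp, hξ', comp_smul]; rfl)
  refine ⟨t * s, mul_mem t.2 s.2, (t : R) • ξ, ?_⟩
  rw [mul_smul]
  exact ht

end Localization

section Noetherian

variable {R : Type*} [CommRing R] [IsNoetherianRing R]

theorem Module.subsingleton_dual_of_forall_isAssociatedPrime {C : Type*} [AddCommGroup C]
    [Module R C] (hC : ∀ p : Ideal R, IsAssociatedPrime p R → ∀ c : C, ∃ s ∉ p, s • c = 0) :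
    Subsingleton (Dual R C) := by
  refine subsingleton_of_forall_eq 0 fun φ => ext fun c => ?_
  by_contra hc
  obtain ⟨p, hp, hle⟩ := exists_le_isAssociatedPrime_of_isNoetherianRing R (φ c) hc
  obtain ⟨s, hsp, hsc⟩ := hC p hp c
  refine hsp (hle (Submodule.mem_colon_singleton.mpr ((Submodule.mem_bot R).mpr ?_)))
  rw [← map_smul, hsc, map_zero]

theorem GenericallyGorenstein.dualMap_dualMap_injective (hR : GenericallyGorenstein R)
    {N F : Type*} [AddCommGroup N] [Module R N] [AddCommGroup F] [Module R F]
    [Module.Finite R N] [Module.FinitePresentation R F] {i : N →ₗ[R] F}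
    (hi : Function.Injective i) : Function.Injective i.dualMap.dualMap := by
  refine dualMap_injective_of_subsingleton_dual_quotient
    (subsingleton_dual_of_forall_isAssociatedPrime fun p hp c => ?_)
  have := hp.isPrime
  have := (hR p hp).2
  obtain ⟨ψ, rfl⟩ := Submodule.mkQ_surjective _ c
  obtain ⟨s, hs, hψ⟩ := exists_smul_mem_range_dualMap p.primeCompl hi ψ
  exact ⟨s, hs, by rwa [← map_smul, Submodule.mkQ_apply, Submodule.Quotient.mk_eq_zero]⟩

theorem exists_injective_exact_of_bijective_dual_eval {M : Type*} [AddCommGroup M] [Module R M]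
    [Module.Finite R M] (hM : Function.Bijective (Dual.eval R M)) :
    ∃ (a b : ℕ) (f : M →ₗ[R] (Fin a → R)) (g : (Fin a → R) →ₗ[R] (Fin b → R)),
      Function.Injective f ∧ Function.Exact f g := by
  have := Module.finitePresentation_of_finite R (Dual R M)
  obtain ⟨a, b, e, q, he, hqe⟩ := Module.FinitePresentation.exists_fin' R (Dual R M)
  let εa := (Pi.basisFun R (Fin a)).toDualEquiv
  let εb := (Pi.basisFun R (Fin b)).toDualEquiv
  refine ⟨a, b, εa.symm ∘ₗ e.dualMap ∘ₗ Dual.eval R M, εb.symm ∘ₗ q.dualMap ∘ₗ εa, ?_, ?_⟩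
  · exact εa.symm.injective.comp ((dualMap_injective_of_surjective he).comp hM.injective)
  · rw [LinearEquiv.postcomp_exact_iff_exact, ← comp_assoc, hM.surjective.comp_exact_iff_exact]
    exact (LinearEquiv.conj_symm_exact_iff_exact _ _ εa).mpr (hqe.dualMap he)

end Noetherian

/-- over a Noetherian generically Gorenstein ring, `M` is reflexive
(the canonical map `M → M**` is bijective) iff there is an exact sequence
`0 → M → F → G` with `F`, `G` finitely generated free. -/
theorem stmt3 {R M : Type*} [CommRing R] [IsNoetherianRing R]
    [AddCommGroup M] [Module R M] [Module.Finite R M]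
    (hR : GenericallyGorenstein R) :
    Function.Bijective (Module.Dual.eval R M) ↔
      ∃ (a b : ℕ) (f : M →ₗ[R] (Fin a → R)) (g : (Fin a → R) →ₗ[R] (Fin b → R)),
        Function.Injective f ∧ LinearMap.range f = LinearMap.ker g := by
  simp only [eq_comm (a := range _), ← LinearMap.exact_iff]
  refine ⟨exists_injective_exact_of_bijective_dual_eval, fun ⟨a, b, f, g, hf, hfg⟩ => ?_⟩
  have : IsReflexive R M := .of_exact hf hfg (bijective_dual_eval R _).injective
    (hR.dualMap_dualMap_injective hf)
  exact bijective_dual_eval R M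
end
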